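/- arXiv:2206.02939 — 5 statements merged into one kernel-verified Lean document; each statement's English description precedes it below -/
import Mathlib

section
/- For n ≥ m, the orbit of a tuple (π₁,…,π_r) ∈ S_n^r under componentwise conjugation by the subgroup Stab_n(m) = {τ ∈ S_n : τ(i)=i for all i ∈ [m]} has cardinality equal to (n-m)! / ((n-m-s)! · b), where s = |Sup^m(π)| is the number of elements of [n]∖[m] moved by at least one π_i, and b is the order of the subgroup of permutations of Sup^m(π) that fix each π_i under conjugation. In particular, this cardinality equals (1/b)·(n-m)(n-m-1)⋯(n-m-s+1). -/
open Equiv Equiv.Perm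
variable {n m r : ℕ}


lemma natCard_perm (β : Type*) [Finite β] :
    Nat.card (Equiv.Perm β) = (Nat.card β).factorial := by
  classical
  have := Fintype.ofFinite β
  simp [Nat.card_eq_fintype_card, Fintype.card_perm]

lemma aux_card_fix {n : ℕ} (p : Fin n → Prop) :
    Nat.card {τ : Equiv.Perm (Fin n) // ∀ x, ¬ p x → τ x = x}
      = (Nat.card {x // p x}).factorial := by
  classical
  rw [Nat.card_congr (Equiv.Perm.subtypeEquivSubtypePerm p).symm, natCard_perm]

lemma aux_card_supp {n : ℕ} (p : Fin n → Prop) :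
    Nat.card {τ : Equiv.Perm (Fin n) // ∀ x, τ x ≠ x → p x}
      = (Nat.card {x // p x}).factorial := by
  classical
  rw [← aux_card_fix p]
  apply Nat.card_congr
  apply Equiv.subtypeEquivRight
  intro σ
  constructor
  · intro h a ha
    by_contra hc
    exact ha (h a hc)
  · intro h x hx
    by_contra hc
    exact hx (h x hc)

lemma natCard_high {n m : ℕ} (hmn : m ≤ n) :
    Nat.card {x : Fin n // m ≤ (x : ℕ)} = n - m := by
  classical
  have e1 : {x : Fin n // (x : ℕ) < m} ≃ Fin m :=
    ⟨fun x => ⟨x.1.1, x.2⟩, fun k => ⟨⟨k.1, k.2.trans_le hmn⟩, k.2⟩,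
      fun x => by ext; rfl, fun k => by ext; rfl⟩
  have h1 : Fintype.card {x : Fin n // (x : ℕ) < m} = m := by
    rw [Fintype.card_congr e1, Fintype.card_fin]
  have h2 := Fintype.card_subtype_compl (p := fun x : Fin n => (x : ℕ) < m)
  rw [h1, Fintype.card_fin] at h2
  have e2 : {x : Fin n // m ≤ (x : ℕ)} ≃ {x : Fin n // ¬ (x : ℕ) < m} :=
    Equiv.subtypeEquivRight fun x => not_lt.symm
  rw [Nat.card_congr e2, Nat.card_eq_fintype_card, h2]


lemma aux_A_commute (π : Fin r → Equiv.Perm (Fin n)) (α : Equiv.Perm (Fin n))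
    (hα : ∀ x, α x ≠ x → m ≤ (x : ℕ) ∧ ∀ i, π i x = x) (i : Fin r) :
    α * π i = π i * α := by
  ext x
  simp only [Equiv.Perm.mul_apply]
  by_cases h1 : α x = x
  · by_cases h2 : α (π i x) = π i x
    · rw [h2, h1]
    · have hf := hα _ h2
      have hxx : π i x = x := (π i).injective (hf.2 i)
      rw [hxx, h1, hxx]
  · have hf := hα _ h1
    have hx : π i x = x := hf.2 i
    have h3 : α (α x) ≠ α x := fun hc => h1 (α.injective hc)
    have hf2 := hα _ h3
    rw [hx, hf2.2 i]

lemma aux_partition (π : Fin r → Equiv.Perm (Fin n)) (hmn : m ≤ n) :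
    Nat.card {x : Fin n // m ≤ (x : ℕ) ∧ ∃ i, π i x ≠ x}
      + Nat.card {x : Fin n // m ≤ (x : ℕ) ∧ ∀ i, π i x = x} = n - m ∧
    Nat.card {x : Fin n // m ≤ (x : ℕ) ∧ ∃ i, π i x ≠ x} ≤ n - m := by
  classical
  set T := {x : Fin n // m ≤ (x : ℕ)}
  have eS : {x : Fin n // m ≤ (x : ℕ) ∧ ∃ i, π i x ≠ x}
      ≃ {y : T // ∃ i, π i y.1 ≠ y.1} :=
    (Equiv.subtypeSubtypeEquivSubtypeInter (fun x : Fin n => m ≤ (x : ℕ))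
      (fun x => ∃ i, π i x ≠ x)).symm
  have eF : {x : Fin n // m ≤ (x : ℕ) ∧ ∀ i, π i x = x}
      ≃ {y : T // ¬ ∃ i, π i y.1 ≠ y.1} := by
    refine ((Equiv.subtypeSubtypeEquivSubtypeInter (fun x : Fin n => m ≤ (x : ℕ))
      (fun x => ∀ i, π i x = x)).symm).trans (Equiv.subtypeEquivRight fun y => ?_)
    push_neg
    rfl
  have hcompl := Fintype.card_subtype_compl (α := T) (p := fun y => ∃ i, π i y.1 ≠ y.1)
  have hle := Fintype.card_subtype_le (α := T) (p := fun y => ∃ i, π i y.1 ≠ y.1)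
  have hT : Fintype.card T = n - m := by
    rw [← Nat.card_eq_fintype_card]; exact natCard_high hmn
  rw [Nat.card_congr eS, Nat.card_congr eF, Nat.card_eq_fintype_card,
    Nat.card_eq_fintype_card, hcompl, hT]
  omega


lemma aux_A_commute' (π : Fin r → Equiv.Perm (Fin n)) (α : Equiv.Perm (Fin n))
    (hα : ∀ x, α x ≠ x → m ≤ (x : ℕ) ∧ ∀ i, π i x = x) (i : Fin r) :
    α * π i = π i * α := by
  ext x
  simp only [Equiv.Perm.mul_apply]
  by_cases h1 : α x = x
  · by_cases h2 : α (π i x) = π i x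
    · rw [h2, h1]
    · have hf := hα _ h2
      have hxx : π i x = x := (π i).injective (hf.2 i)
      rw [hxx, h1, hxx]
  · have hf := hα _ h1
    have hx : π i x = x := hf.2 i
    have h3 : α (α x) ≠ α x := fun hc => h1 (α.injective hc)
    have hf2 := hα _ h3
    rw [hx, hf2.2 i]

lemma aux_stab_card (π : Fin r → Equiv.Perm (Fin n)) :
    Nat.card {τ : Equiv.Perm (Fin n) //
        (∀ x : Fin n, (x : ℕ) < m → τ x = x) ∧ ∀ i, τ * π i = π i * τ}
    = Nat.card {τ : Equiv.Perm (Fin n) //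
        (∀ x : Fin n, τ x ≠ x → m ≤ (x : ℕ) ∧ ∃ i, π i x ≠ x) ∧ ∀ i, τ * π i = π i * τ}
      * Nat.card {τ : Equiv.Perm (Fin n) //
        ∀ x : Fin n, τ x ≠ x → m ≤ (x : ℕ) ∧ ∀ i, π i x = x} := by
  classical
  set B := {τ : Equiv.Perm (Fin n) //
    (∀ x : Fin n, τ x ≠ x → m ≤ (x : ℕ) ∧ ∃ i, π i x ≠ x) ∧ ∀ i, τ * π i = π i * τ} with hB
  set A := {τ : Equiv.Perm (Fin n) //
    ∀ x : Fin n, τ x ≠ x → m ≤ (x : ℕ) ∧ ∀ i, π i x = x} with hA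
  set S := {τ : Equiv.Perm (Fin n) //
    (∀ x : Fin n, (x : ℕ) < m → τ x = x) ∧ ∀ i, τ * π i = π i * τ} with hS
  have hf : ∀ p : B × A,
      ((∀ x : Fin n, (x : ℕ) < m → (p.1.1 * p.2.1) x = x) ∧
        ∀ i, (p.1.1 * p.2.1) * π i = π i * (p.1.1 * p.2.1)) := by
    rintro ⟨β, α⟩
    constructor
    · intro x hx
      have hax : α.1 x = x := by
        by_contra hc; exact absurd (α.2 x hc).1 (by omega)
      have hbx : β.1 x = x := by
        by_contra hc; exact absurd (β.2.1 x hc).1 (by omega)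
      simp only [Equiv.Perm.mul_apply, hax, hbx]
    · intro i
      have hAc := aux_A_commute' π α.1 α.2 i
      have hBc := β.2.2 i
      rw [mul_assoc, hAc, ← mul_assoc, hBc, mul_assoc]
  let f : B × A → S := fun p => ⟨p.1.1 * p.2.1, hf p⟩
  have hinj : Function.Injective f := by
    rintro ⟨β₁, α₁⟩ ⟨β₂, α₂⟩ h
    have hperm : β₁.1 * α₁.1 = β₂.1 * α₂.1 := congrArg Subtype.val h
    have hγ : β₂.1⁻¹ * β₁.1 = α₂.1 * α₁.1⁻¹ := by
      have h' : β₂.1⁻¹ * (β₁.1 * α₁.1) * α₁.1⁻¹ = β₂.1⁻¹ * (β₂.1 * α₂.1) * α₁.1⁻¹ := by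
        rw [hperm]
      simpa [mul_assoc] using h'
    have key : α₂.1 * α₁.1⁻¹ = 1 := by
      apply Equiv.ext
      intro x
      simp only [Equiv.Perm.mul_apply, Equiv.Perm.coe_one, id_eq]
      by_contra hc
      have hxF : m ≤ (x : ℕ) ∧ ∀ i, π i x = x := by
        by_cases h1 : α₁.1⁻¹ x = x
        · rw [h1] at hc; exact α₂.2 x hc
        · have hy' : α₁.1 (α₁.1⁻¹ x) ≠ α₁.1⁻¹ x := by
            rw [Equiv.Perm.coe_inv, Equiv.apply_symm_apply]; exact fun he => h1 he.symm
          have h5 : α₁.1 (α₁.1 (α₁.1⁻¹ x)) ≠ α₁.1 (α₁.1⁻¹ x) :=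
            fun hc2 => hy' (α₁.1.injective hc2)
          have h6 := α₁.2 _ h5
          rwa [Equiv.Perm.coe_inv, Equiv.apply_symm_apply] at h6
      have hγx : (β₂.1⁻¹ * β₁.1) x = α₂.1 (α₁.1⁻¹ x) := by rw [hγ]; rfl
      have hb1 : β₁.1 x = x := by
        by_contra hb
        rcases (β₁.2.1 x hb).2 with ⟨i, hi⟩
        exact hi (hxF.2 i)
      have hb2 : β₂.1⁻¹ x = x := by
        by_contra hb
        have hb' : β₂.1 x ≠ x := by
          intro he; exact hb (by rw [Equiv.Perm.inv_eq_iff_eq]; exact he.symm)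
        rcases (β₂.2.1 x hb').2 with ⟨i, hi⟩
        exact hi (hxF.2 i)
      rw [Equiv.Perm.mul_apply, hb1, hb2] at hγx
      exact hc hγx.symm
    have hα12 : α₂ = α₁ := Subtype.ext (mul_inv_eq_one.1 key)
    subst hα12
    have hβ12 : β₁ = β₂ := Subtype.ext (mul_right_cancel hperm)
    rw [hβ12]
  have hsurj : Function.Surjective f := by
    rintro ⟨τ, h1, h2⟩
    have hpt : ∀ (i : Fin r) (x : Fin n), τ (π i x) = π i (τ x) := by
      intro i x
      have := DFunLike.congr_fun (h2 i) x
      simpa [Equiv.Perm.mul_apply] using this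
    have hF : ∀ x : Fin n, (m ≤ (x : ℕ) ∧ ∀ i, π i x = x) ↔
        (m ≤ ((τ x : Fin n) : ℕ) ∧ ∀ i, π i (τ x) = τ x) := by
      intro x
      constructor
      · rintro ⟨hm, hfix⟩
        refine ⟨?_, fun i => ?_⟩
        · by_contra hcm
          push_neg at hcm
          have hτ := h1 (τ x) hcm
          have hxx := τ.injective hτ
          rw [hxx] at hcm; omega
        · have := hpt i x
          rw [hfix i] at this
          exact this.symm
      · rintro ⟨hm, hfix⟩
        by_cases hxm : (x : ℕ) < m
        · have hx := h1 x hxm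
          rw [hx] at hm hfix
          exact ⟨hm, hfix⟩
        · refine ⟨not_lt.1 hxm, fun i => ?_⟩
          have h' := hpt i x
          rw [hfix i] at h'
          exact τ.injective h'
    set α := Equiv.Perm.ofSubtype (τ.subtypePerm (p := fun x : Fin n => m ≤ (x : ℕ) ∧ ∀ i, π i x = x) (fun x => (hF x).symm)) with hαdef
    have hαmem : ∀ x : Fin n, α x ≠ x → m ≤ (x : ℕ) ∧ ∀ i, π i x = x := by
      intro x hx
      by_contra hcm
      exact hx (Equiv.Perm.ofSubtype_apply_of_not_mem _ hcm)
    have hαF : ∀ x : Fin n, (m ≤ (x : ℕ) ∧ ∀ i, π i x = x) → α x = τ x := by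
      intro x hx
      exact Equiv.Perm.ofSubtype_subtypePerm_of_mem (p := fun x : Fin n => m ≤ (x : ℕ) ∧ ∀ i, π i x = x) (fun x => (hF x).symm) hx
    have hβsupp : ∀ x : Fin n, ¬(m ≤ (x : ℕ) ∧ ∃ i, π i x ≠ x) → (τ * α⁻¹) x = x := by
      intro x hx
      have key : α (τ⁻¹ x) = x := by
        by_cases hxm : (x : ℕ) < m
        · have h1x := h1 x hxm
          have ht : τ⁻¹ x = x := by rw [Equiv.Perm.inv_eq_iff_eq]; exact h1x.symm
          rw [ht]
          apply Equiv.Perm.ofSubtype_apply_of_not_mem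
          rintro ⟨hm', _⟩; omega
        · have hm' : m ≤ (x : ℕ) := not_lt.1 hxm
          have hfix : ∀ i, π i x = x := by
            by_contra hcfix
            push_neg at hcfix
            rcases hcfix with ⟨i, hi⟩
            exact hx ⟨hm', ⟨i, hi⟩⟩
          have hpF : m ≤ ((τ⁻¹ x : Fin n) : ℕ) ∧ ∀ i, π i (τ⁻¹ x) = τ⁻¹ x := by
            have hiff := hF (τ⁻¹ x)
            rw [Equiv.Perm.coe_inv, Equiv.apply_symm_apply] at hiff
            exact hiff.2 ⟨hm', hfix⟩
          rw [hαF _ hpF, Equiv.Perm.coe_inv, Equiv.apply_symm_apply]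
      have hinv : α⁻¹ x = τ⁻¹ x := by rw [Equiv.Perm.inv_eq_iff_eq]; exact key.symm
      rw [Equiv.Perm.mul_apply, hinv, Equiv.Perm.coe_inv, Equiv.apply_symm_apply]
    have hβcomm : ∀ i, (τ * α⁻¹) * π i = π i * (τ * α⁻¹) := by
      intro i
      have hAc : Commute α (π i) := aux_A_commute' π α hαmem i
      have hAc' : α⁻¹ * π i = π i * α⁻¹ := hAc.inv_left
      rw [mul_assoc, hAc', ← mul_assoc, h2 i, mul_assoc]
    refine ⟨⟨⟨τ * α⁻¹, fun x hx => by_contra fun hcm => hx (hβsupp x hcm), hβcomm⟩,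
      ⟨α, hαmem⟩⟩, ?_⟩
    apply Subtype.ext
    show (τ * α⁻¹) * α = τ
    rw [mul_assoc, inv_mul_cancel, mul_one]
  rw [← Nat.card_prod]
  exact (Nat.card_congr (Equiv.ofBijective f ⟨hinj, hsurj⟩)).symm

def fixSubgroup (n m : ℕ) : Subgroup (ConjAct (Equiv.Perm (Fin n))) where
  carrier := {τ | ∀ x : Fin n, (x : ℕ) < m → ConjAct.ofConjAct τ x = x}
  one_mem' := by intro x _; simp
  mul_mem' := by
    intro a b ha hb x hx
    rw [map_mul]
    simp only [Equiv.Perm.mul_apply, hb x hx, ha x hx]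
  inv_mem' := by
    intro a ha x hx
    rw [map_inv]
    conv_lhs => rw [← ha x hx]
    exact Equiv.symm_apply_apply _ x


lemma fixSubgroup_card (hmn : m ≤ n) :
    Nat.card (fixSubgroup n m) = (n - m).factorial := by
  classical
  have e1 : fixSubgroup n m ≃
      {τ : Equiv.Perm (Fin n) // ∀ x : Fin n, (x : ℕ) < m → τ x = x} :=
    Equiv.subtypeEquiv ConjAct.ofConjAct.toEquiv (fun a => Iff.rfl)
  have e2 : {τ : Equiv.Perm (Fin n) // ∀ x : Fin n, (x : ℕ) < m → τ x = x} ≃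
      {τ : Equiv.Perm (Fin n) // ∀ x : Fin n, ¬ m ≤ (x : ℕ) → τ x = x} :=
    Equiv.subtypeEquivRight fun τ => by
      constructor
      · intro h x hx; exact h x (not_le.1 hx)
      · intro h x hx; exact h x (not_le.2 hx)
  rw [Nat.card_congr (e1.trans e2), aux_card_fix, natCard_high hmn]

lemma stabilizer_card_eq (π : Fin r → Equiv.Perm (Fin n)) :
    Nat.card (MulAction.stabilizer (fixSubgroup n m) π)
      = Nat.card {τ : Equiv.Perm (Fin n) //
          (∀ x : Fin n, (x : ℕ) < m → τ x = x) ∧ ∀ i, τ * π i = π i * τ} := by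
  apply Nat.card_congr
  refine ⟨fun g => ⟨ConjAct.ofConjAct g.1.1, g.1.2, fun i => ?_⟩,
    fun t => ⟨⟨ConjAct.toConjAct t.1, t.2.1⟩, ?_⟩, fun g => rfl, fun t => rfl⟩
  · have h' : ConjAct.ofConjAct g.1.1 * π i * (ConjAct.ofConjAct g.1.1)⁻¹ = π i := by
      rw [← ConjAct.smul_def]
      exact congrFun g.2 i
    exact mul_inv_eq_iff_eq_mul.mp h'
  · show ((ConjAct.toConjAct t.1 : ConjAct (Equiv.Perm (Fin n))) : ConjAct (Equiv.Perm (Fin n))) • π = π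
    funext i
    show ConjAct.toConjAct t.1 • π i = π i
    rw [ConjAct.smul_def, ConjAct.ofConjAct_toConjAct]
    exact mul_inv_eq_iff_eq_mul.mpr (t.2.2 i)
/-- For `n ≥ m`, the orbit of a tuple `(π₁,…,π_r) ∈ S_n^r` under
componentwise conjugation by `Stab_n(m) = {τ ∈ S_n : τ(i) = i for i ∈ [m]}` (with
`[m]` the first `m` points of `Fin n`) has cardinality
`(n-m)! / ((n-m-s)! · b) = (1/b)·(n-m)(n-m-1)⋯(n-m-s+1)`, where `s = |Sup^m(π)|`
is the number of points outside `[m]` moved by at least one `πᵢ`, and `b` is the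
order of the group of permutations supported on `Sup^m(π)` commuting with every
`πᵢ`. -/
theorem stmt2 (n m r : ℕ) (hmn : m ≤ n) (π : Fin r → Equiv.Perm (Fin n)) :
    let orbit : Set (Fin r → Equiv.Perm (Fin n)) :=
      {σ | ∃ τ : Equiv.Perm (Fin n), (∀ x : Fin n, (x : ℕ) < m → τ x = x) ∧
        ∀ i, σ i = τ * π i * τ⁻¹}
    let s : ℕ := Nat.card {x : Fin n // m ≤ (x : ℕ) ∧ ∃ i, π i x ≠ x}
    let b : ℕ := Nat.card {τ : Equiv.Perm (Fin n) //
      (∀ x : Fin n, τ x ≠ x → m ≤ (x : ℕ) ∧ ∃ i, π i x ≠ x) ∧ ∀ i, τ * π i = π i * τ}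
    orbit.ncard = (n - m).factorial / ((n - m - s).factorial * b) ∧
      b * orbit.ncard = (n - m).descFactorial s := by
  intro orbit s b
  classical
  have hs : s = Nat.card {x : Fin n // m ≤ (x : ℕ) ∧ ∃ i, π i x ≠ x} := rfl
  have hb : b = Nat.card {τ : Equiv.Perm (Fin n) //
      (∀ x : Fin n, τ x ≠ x → m ≤ (x : ℕ) ∧ ∃ i, π i x ≠ x) ∧
        ∀ i, τ * π i = π i * τ} := rfl
  have horb : orbit = MulAction.orbit (fixSubgroup n m) π := by
    ext σ
    simp only [MulAction.mem_orbit_iff]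
    constructor
    · rintro ⟨τ, hτ, hστ⟩
      refine ⟨⟨ConjAct.toConjAct τ, ?_⟩, ?_⟩
      · intro x hx
        simpa using hτ x hx
      · funext i
        show ConjAct.toConjAct τ • π i = σ i
        rw [ConjAct.smul_def, ConjAct.ofConjAct_toConjAct]
        exact (hστ i).symm
    · rintro ⟨g, hg⟩
      refine ⟨ConjAct.ofConjAct g.1, g.2, fun i => ?_⟩
      have h' : (ConjAct.ofConjAct (g : ConjAct (Equiv.Perm (Fin n)))) * π i *
          (ConjAct.ofConjAct (g : ConjAct (Equiv.Perm (Fin n))))⁻¹ = σ i := by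
        rw [← ConjAct.smul_def]
        exact congrFun hg i
      exact h'.symm
  have hos : Nat.card (MulAction.orbit (fixSubgroup n m) π) *
      Nat.card (MulAction.stabilizer (fixSubgroup n m) π) =
        Nat.card (fixSubgroup n m) := by
    rw [Nat.card_congr (MulAction.orbitEquivQuotientStabilizer (fixSubgroup n m) π)]
    exact (Subgroup.card_eq_card_quotient_mul_card_subgroup _).symm
  have hN : orbit.ncard = Nat.card (MulAction.orbit (fixSubgroup n m) π) := by
    rw [horb]
    exact (Nat.card_coe_set_eq _).symm
  have hstab := stabilizer_card_eq (m := m) π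
  rw [aux_stab_card π] at hstab
  have hpart := aux_partition π hmn
  have hs_le : s ≤ n - m := by rw [hs]; exact hpart.2
  have hcardF : Nat.card {x : Fin n // m ≤ (x : ℕ) ∧ ∀ i, π i x = x} = n - m - s := by
    have h1 := hpart.1
    omega
  have hA : Nat.card {τ : Equiv.Perm (Fin n) //
      ∀ x : Fin n, τ x ≠ x → m ≤ (x : ℕ) ∧ ∀ i, π i x = x}
        = (n - m - s).factorial := by
    rw [aux_card_supp, hcardF]
  have hkey : orbit.ncard * ((n - m - s).factorial * b) = (n - m).factorial := by
    rw [hN, ← fixSubgroup_card (n := n) (m := m) hmn, ← hos]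
    congr 1
    rw [hstab, hA, ← hb, mul_comm]
  have hbpos : 0 < b := by
    rw [hb]
    have : Nonempty {τ : Equiv.Perm (Fin n) //
        (∀ x : Fin n, τ x ≠ x → m ≤ (x : ℕ) ∧ ∃ i, π i x ≠ x) ∧
          ∀ i, τ * π i = π i * τ} :=
      ⟨⟨1, fun x hx => absurd rfl hx, fun i => by rw [one_mul, mul_one]⟩⟩
    exact Nat.card_pos
  have hKpos : 0 < (n - m - s).factorial * b := Nat.mul_pos (Nat.factorial_pos _) hbpos
  constructor
  · rw [← hkey, Nat.mul_div_cancel _ hKpos]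
  · have h2 : (n - m - s).factorial * (n - m).descFactorial s = (n - m).factorial :=
      Nat.factorial_mul_descFactorial hs_le
    have h3 : (n - m - s).factorial * (b * orbit.ncard) =
        (n - m - s).factorial * ((n - m).descFactorial s) := by
      rw [h2, ← hkey]; ring
    exact Nat.eq_of_mul_eq_mul_left (Nat.factorial_pos _) h3
end

section
/- Let π = (π₁,…,π_r) ∈ S_n^r with n ≥ m, and let G = Stab_n(m) be the group of permutations of [n] fixing [m] pointwise. Then the stabilizer of π in G under componentwise conjugation is the internal direct product of: (a) the subgroup of permutations fixing [m] ∪ Sup^m(π) pointwise, and (b) the subgroup of permutations supported on Sup^m(π) that commute with every π_i. In particular the stabilizer is isomorphic to the direct product of these two subgroups. -/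
theorem Equiv.Perm.apply_inv_self {α : Type*} (f : Equiv.Perm α) (x : α) : f (f⁻¹ x) = x :=
  f.apply_symm_apply x

theorem Equiv.Perm.inv_apply_self {α : Type*} (f : Equiv.Perm α) (x : α) : f⁻¹ (f x) = x :=
  f.symm_apply_apply x


/-- Let `π = (π₁,…,π_r) ∈ S_n^r` with `n ≥ m`, and let
`G = Stab_n(m)` be the permutations of `[n]` fixing `[m]` (the first `m` points)
pointwise.  An element `τ ∈ G` stabilizes `π` under componentwise conjugation if
and only if it factors **uniquely** as `τ = τ₁ * τ₂` where `τ₁` fixes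
`[m] ∪ Sup^m(π)` pointwise, `τ₂` is supported on `Sup^m(π)` and commutes with
every `πᵢ`, and the two factors commute: the stabilizer is the internal direct
product of these two subgroups. -/
theorem stmt3 (n m r : ℕ) (hmn : m ≤ n) (π : Fin r → Equiv.Perm (Fin n))
    (τ : Equiv.Perm (Fin n)) (hτ : ∀ x : Fin n, (x : ℕ) < m → τ x = x) :
    (∀ i, τ * π i * τ⁻¹ = π i) ↔
      ∃! p : Equiv.Perm (Fin n) × Equiv.Perm (Fin n),
        (∀ x : Fin n, ((x : ℕ) < m ∨ ∃ i, π i x ≠ x) → p.1 x = x) ∧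
        (∀ x : Fin n, p.2 x ≠ x → m ≤ (x : ℕ) ∧ ∃ i, π i x ≠ x) ∧
        (∀ i, p.2 * π i = π i * p.2) ∧
        p.1 * p.2 = p.2 * p.1 ∧ τ = p.1 * p.2 := by
  classical
  constructor
  · intro hcomm
    have hc : ∀ i x, τ (π i x) = π i (τ x) := by
      intro i x
      have := congrArg (fun σ => σ (τ x)) (hcomm i)
      simpa using this
    have hlow : ∀ x : Fin n, (τ x : ℕ) < m ↔ (x : ℕ) < m := by
      intro x
      constructor
      · intro h
        have h2 : τ (τ x) = τ x := hτ _ h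
        have := τ.injective h2
        rwa [this] at h
      · intro h; rw [hτ x h]; exact h
    set P : Fin n → Prop := fun x => m ≤ (x : ℕ) ∧ ∃ i, π i x ≠ x with hPdef
    have hsub : ∀ x, P x ↔ P (τ x) := by
      intro x
      simp only [hPdef]
      constructor
      · rintro ⟨hm, i, hi⟩
        refine ⟨not_lt.1 fun h => absurd ((hlow x).1 h) (not_lt.2 hm), i, ?_⟩
        rw [← hc i x]
        exact fun h => hi (τ.injective h)
      · rintro ⟨hm, i, hi⟩
        refine ⟨not_lt.1 fun h => absurd ((hlow x).2 h) (not_lt.2 hm), i, ?_⟩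
        intro h
        exact hi (by rw [← hc i x, h])
    set τ₂ : Equiv.Perm (Fin n) := Equiv.Perm.ofSubtype (τ.subtypePerm (fun x => (hsub x).symm)) with hτ₂def
    have h2mem : ∀ x, P x → τ₂ x = τ x := by
      intro x hx
      rw [hτ₂def, Equiv.Perm.ofSubtype_apply_of_mem _ hx, Equiv.Perm.subtypePerm_apply]
    have h2not : ∀ x, ¬ P x → τ₂ x = x := by
      intro x hx
      rw [hτ₂def, Equiv.Perm.ofSubtype_apply_of_not_mem _ hx]
    have h2invmem : ∀ x, P x → τ₂⁻¹ x = τ⁻¹ x := by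
      intro x hx
      have hPx : P (τ⁻¹ x) := by
        have := hsub (τ⁻¹ x)
        rw [Equiv.Perm.apply_inv_self] at this
        exact this.2 hx
      have h3 : τ₂ (τ⁻¹ x) = x := by rw [h2mem _ hPx, Equiv.Perm.apply_inv_self]
      calc τ₂⁻¹ x = τ₂⁻¹ (τ₂ (τ⁻¹ x)) := by rw [h3]
        _ = τ⁻¹ x := Equiv.Perm.inv_apply_self _ _
    have h2invnot : ∀ x, ¬ P x → τ₂⁻¹ x = x := by
      intro x hx
      have : τ₂ x = x := h2not x hx
      nth_rewrite 1 [← this]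
      rw [Equiv.Perm.inv_apply_self]
    set τ₁ : Equiv.Perm (Fin n) := τ * τ₂⁻¹ with hτ₁def
    have h1fix : ∀ x : Fin n, ((x : ℕ) < m ∨ ∃ i, π i x ≠ x) → τ₁ x = x := by
      intro x hx
      by_cases hPx : P x
      · rw [hτ₁def, Equiv.Perm.mul_apply, h2invmem x hPx, Equiv.Perm.apply_inv_self]
      · have hxm : (x : ℕ) < m := by
          rcases hx with h | h
          · exact h
          · by_contra hh
            exact hPx ⟨not_lt.1 hh, h⟩
        rw [hτ₁def, Equiv.Perm.mul_apply, h2invnot x hPx, hτ x hxm]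
    have h2supp : ∀ x : Fin n, τ₂ x ≠ x → m ≤ (x : ℕ) ∧ ∃ i, π i x ≠ x := by
      intro x hx
      by_contra hh
      exact hx (h2not x hh)
    have h2comm : ∀ i, τ₂ * π i = π i * τ₂ := by
      intro i
      apply Equiv.ext; intro x
      simp only [Equiv.Perm.mul_apply]
      by_cases hPx : P x
      · by_cases hPy : P (π i x)
        · rw [h2mem _ hPy, h2mem _ hPx, hc]
        · -- π i x < m case (or π i x = x)
          by_cases hxy : π i x = x
          · rw [hxy] at hPy; exact absurd hPx hPy
          · have hmove : ∃ j, π j (π i x) ≠ π i x :=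
              ⟨i, fun h => hxy ((π i).injective h)⟩
            have hlt : (π i x : ℕ) < m := by
              by_contra hh
              exact hPy ⟨not_lt.1 hh, hmove⟩
            rw [h2not _ hPy, h2mem _ hPx, ← hc, hτ _ hlt]
      · by_cases hPy : P (π i x)
        · by_cases hxy : π i x = x
          · rw [hxy] at hPy; exact absurd hPy hPx
          · have hmove : ∃ j, π j x ≠ x := ⟨i, hxy⟩
            have hlt : (x : ℕ) < m := by
              by_contra hh
              exact hPx ⟨not_lt.1 hh, hmove⟩
            rw [h2mem _ hPy, h2not _ hPx, hc, hτ _ hlt]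
        · rw [h2not _ hPy, h2not _ hPx]
    have hprod : τ = τ₁ * τ₂ := by
      rw [hτ₁def, inv_mul_cancel_right]
    have hfcomm : τ₁ * τ₂ = τ₂ * τ₁ := by
      apply Equiv.ext; intro x
      simp only [Equiv.Perm.mul_apply]
      by_cases hPx : P x
      · have hPy : P (τ x) := (hsub x).1 hPx
        rw [h2mem _ hPx, hτ₁def, Equiv.Perm.mul_apply, h2invmem _ hPy,
          Equiv.Perm.inv_apply_self, Equiv.Perm.mul_apply, h2invmem _ hPx,
          Equiv.Perm.apply_inv_self, h2mem _ hPx]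
      · have hPy : ¬ P (τ x) := fun h => hPx ((hsub x).2 h)
        rw [h2not _ hPx, hτ₁def, Equiv.Perm.mul_apply, h2invnot _ hPx, h2not _ hPy]
    refine ⟨(τ₁, τ₂), ⟨h1fix, h2supp, h2comm, hfcomm, hprod⟩, ?_⟩
    rintro ⟨q₁, q₂⟩ ⟨hq1, hq2, hq3, hq4, hq5⟩
    have hq2eq : q₂ = τ₂ := by
      apply Equiv.ext; intro x
      by_cases hPx : P x
      · have hq1x : q₁ x = x := hq1 x (Or.inr hPx.2)
        have hτx : τ x = q₁ (q₂ x) := by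
          rw [hq5]; rfl
        have : q₂ x = τ x := by
          by_cases hqx : q₂ x = x
          · rw [hqx] at hτx ⊢; rw [hτx, hq1x]
          · have hq2x : q₂ (q₂ x) ≠ q₂ x := fun h => hqx (q₂.injective h)
            have := hq2 _ hq2x
            rw [hτx, hq1 _ (Or.inr this.2)]
        rw [this, h2mem _ hPx]
      · have : q₂ x = x := by
          by_contra hh
          exact hPx (hq2 x hh)
        rw [this, h2not _ hPx]
    have hq1eq : q₁ = τ₁ := by
      have : q₁ = τ * q₂⁻¹ := by
        rw [hq5, mul_inv_cancel_right]
      rw [this, hq2eq, hτ₁def]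
    rw [Prod.ext_iff]
    exact ⟨hq1eq, hq2eq⟩
  · rintro ⟨⟨q₁, q₂⟩, ⟨hq1, hq2, hq3, hq4, hq5⟩, _⟩
    intro i
    have hq1comm : q₁ * π i = π i * q₁ := by
      apply Equiv.ext; intro x
      simp only [Equiv.Perm.mul_apply]
      by_cases hxy : π i x = x
      · rw [hxy]
        by_cases hq1x : q₁ x = x
        · rw [hq1x, hxy]
        · have hq1xx : q₁ (q₁ x) ≠ q₁ x := fun h => hq1x (q₁.injective h)
          have hnot : ¬ (((q₁ x : ℕ)) < m ∨ ∃ j, π j (q₁ x) ≠ q₁ x) := by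
            intro h
            exact hq1xx (hq1 _ h)
          push_neg at hnot
          rw [hnot.2 i]
      · rw [hq1 x (Or.inr ⟨i, hxy⟩),
          hq1 (π i x) (Or.inr ⟨i, fun h => hxy ((π i).injective h)⟩)]
    have hτcomm : τ * π i = π i * τ := by
      rw [hq5, mul_assoc, hq3 i, ← mul_assoc, hq1comm, mul_assoc]
    rw [mul_inv_eq_iff_eq_mul]
    exact hτcomm
end

section
/- Let C be an orbit of Stab(m) (permutations of ℕ with finite support fixing [m] pointwise) acting by componentwise conjugation on r-tuples of finitely-supported permutations of ℕ, and let n ≥ m. Then C ∩ S_n^r is nonempty if and only if n ≥ ||C||^m + m, where ||C||^m is the number of elements of ℕ∖[m] moved by (any) representative tuple of C. -/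
/-- For disjoint finsets of equal cardinality there is a permutation with
support in `A ∪ B` mapping `A` into `B`. -/
lemma stmt4_aux (A : Finset ℕ) : ∀ B : Finset ℕ, Disjoint A B → A.card = B.card →
    ∃ τ : Equiv.Perm ℕ, (∀ x : ℕ, τ x ≠ x → x ∈ A ∪ B) ∧ ∀ a ∈ A, τ a ∈ B := by
  induction A using Finset.induction_on with
  | empty =>
    intro B _ hc
    exact ⟨1, by simp, by simp⟩
  | insert a A' ha ih =>
    intro B hd hc
    have hBne : B.Nonempty := by
      rw [← Finset.card_pos, ← hc, Finset.card_insert_of_notMem ha]; omega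
    obtain ⟨b, hb⟩ := hBne
    have hd' : Disjoint A' (B.erase b) :=
      (hd.mono_left (Finset.subset_insert a A')).mono_right (Finset.erase_subset b B)
    have hc' : A'.card = (B.erase b).card := by
      rw [Finset.card_erase_of_mem hb, ← hc, Finset.card_insert_of_notMem ha]; omega
    obtain ⟨τ', h1, h2⟩ := ih (B.erase b) hd' hc'
    have haB : a ∉ B := Finset.disjoint_left.mp hd (Finset.mem_insert_self a A')
    have hτa : τ' a = a := by
      by_contra h
      rcases Finset.mem_union.mp (h1 a h) with h' | h'
      · exact ha h'
      · exact haB (Finset.mem_of_mem_erase h')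
    refine ⟨Equiv.swap a b * τ', ?_, ?_⟩
    · intro x hx
      by_cases hxa : x = a
      · rw [hxa]; exact Finset.mem_union_left _ (Finset.mem_insert_self a A')
      by_cases hxb : x = b
      · subst hxb; exact Finset.mem_union_right _ hb
      by_cases hτx : τ' x = x
      · exfalso; apply hx
        simp [Equiv.Perm.mul_apply, hτx, Equiv.swap_apply_of_ne_of_ne hxa hxb]
      · rcases Finset.mem_union.mp (h1 x hτx) with h' | h'
        · exact Finset.mem_union_left _ (Finset.mem_insert_of_mem h')
        · exact Finset.mem_union_right _ (Finset.mem_of_mem_erase h')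
    · intro a' ha'
      rcases Finset.mem_insert.mp ha' with rfl | h'
      · simp [Equiv.Perm.mul_apply, hτa, hb]
      · have hmem := h2 a' h'
        have hne1 : τ' a' ≠ a := fun h => haB (Finset.mem_of_mem_erase (h ▸ hmem))
        have hne2 : τ' a' ≠ b := Finset.ne_of_mem_erase hmem
        simp only [Equiv.Perm.mul_apply, Equiv.swap_apply_of_ne_of_ne hne1 hne2]
        exact Finset.mem_of_mem_erase hmem

/-- Let `C` be an orbit of `Stab(m)` (finitely supported
permutations of `ℕ` fixing the first `m` points) acting by componentwise
conjugation on `r`-tuples of finitely supported permutations of `ℕ`, the orbit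
of a representative tuple `π`.  For `n ≥ m`, the orbit meets `S_n^r`
(tuples supported on the first `n` points) if and only if `n ≥ ‖C‖^m + m`,
where `‖C‖^m` is the number of points outside the first `m` moved by some
component of `π`. -/
theorem stmt4 (m n r : ℕ) (hmn : m ≤ n) (π : Fin r → Equiv.Perm ℕ)
    (hfin : ∀ i, {x : ℕ | π i x ≠ x}.Finite) :
    (∃ τ : Equiv.Perm ℕ, {x : ℕ | τ x ≠ x}.Finite ∧ (∀ x < m, τ x = x) ∧
      ∀ (i : Fin r) (x : ℕ), (τ * π i * τ⁻¹) x ≠ x → x < n) ↔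
    {x : ℕ | m ≤ x ∧ ∃ i, π i x ≠ x}.ncard + m ≤ n := by
  set S : Set ℕ := {x : ℕ | m ≤ x ∧ ∃ i, π i x ≠ x} with hSdef
  have hSfin : S.Finite := by
    apply Set.Finite.subset (Set.finite_iUnion hfin)
    rintro x ⟨-, i, hi⟩
    exact Set.mem_iUnion.mpr ⟨i, hi⟩
  constructor
  · rintro ⟨τ, -, hτfix, hτ⟩
    have himg : ∀ x ∈ S, τ x ∈ Set.Ico m n := by
      rintro x ⟨hmx, i, hi⟩
      constructor
      · by_contra h
        have : τ (τ x) = τ x := hτfix _ (by omega)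
        have := τ.injective this
        omega
      · apply hτ i (τ x)
        simp only [Equiv.Perm.mul_apply, Equiv.Perm.inv_def, Equiv.symm_apply_apply]
        exact fun h => hi (τ.injective h)
    have h1 : (τ '' S).ncard = S.ncard := Set.ncard_image_of_injective S τ.injective
    have h2 : (τ '' S).ncard ≤ (Set.Ico m n).ncard := by
      apply Set.ncard_le_ncard _ (Set.finite_Ico m n)
      rintro y ⟨x, hx, rfl⟩
      exact himg x hx
    have h3 : (Set.Ico m n).ncard = n - m := by
      rw [← Finset.coe_Ico, Set.ncard_coe_finset, Nat.card_Ico]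
    omega
  · intro h
    set A : Finset ℕ := hSfin.toFinset with hA
    have hAcard : A.card = S.ncard := (Set.ncard_eq_toFinset_card _ hSfin).symm
    have hIcoCard : A.card ≤ (Finset.Ico m n).card := by
      rw [Nat.card_Ico]; omega
    obtain ⟨B, hBsub, hBcard⟩ := Finset.exists_subset_card_eq hIcoCard
    have hcards : (A \ B).card = (B \ A).card :=
      Finset.card_sdiff_comm hBcard.symm
    obtain ⟨τ, h1, h2⟩ := stmt4_aux (A \ B) (B \ A) (disjoint_sdiff_sdiff) hcards
    have hAm : ∀ x ∈ A, m ≤ x := by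
      intro x hx
      have : x ∈ S := hSfin.mem_toFinset.mp hx
      exact this.1
    have hBIco : ∀ x ∈ B, m ≤ x ∧ x < n := by
      intro x hx
      have := hBsub hx
      simp only [Finset.mem_Ico] at this
      exact this
    have hτA : ∀ a ∈ A, τ a ∈ B ∨ τ a ∈ A := by
      intro a haA
      by_cases hab : a ∈ B
      · by_cases hτa : τ a = a
        · left; rw [hτa]; exact hab
        · rcases Finset.mem_union.mp (h1 a hτa) with h' | h'
          · exact absurd (Finset.mem_sdiff.mp h').2 (fun hh => hh hab)
          · exfalso; exact (Finset.mem_sdiff.mp h').2 haA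
      · have := h2 a (Finset.mem_sdiff.mpr ⟨haA, hab⟩)
        left; exact (Finset.mem_sdiff.mp this).1
    refine ⟨τ, ?_, ?_, ?_⟩
    · apply Set.Finite.subset ((A \ B) ∪ (B \ A) : Finset ℕ).finite_toSet
      intro x hx
      exact_mod_cast h1 x hx
    · intro x hx
      by_contra hτx
      rcases Finset.mem_union.mp (h1 x hτx) with h' | h'
      · have := hAm x (Finset.mem_sdiff.mp h').1; omega
      · have := (hBIco x (Finset.mem_sdiff.mp h').1).1; omega
    · intro i x hx
      simp only [Equiv.Perm.mul_apply] at hx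
      set y := τ⁻¹ x with hy
      have hxy : x = τ y := by rw [hy, Equiv.Perm.inv_def, Equiv.apply_symm_apply]
      by_cases hπy : π i y = y
      · exfalso; apply hx; rw [hπy, ← hxy]
      by_cases hmy : m ≤ y
      · have hyS : y ∈ A := hSfin.mem_toFinset.mpr ⟨hmy, i, hπy⟩
        rcases hτA y hyS with hτy | hτy
        · rw [hxy]; exact (hBIco _ hτy).2
        ·
          by_cases hyB : y ∈ B
          · -- y ∈ A ∩ B: τ fixes y unless y ∈ (A\B) ∪ (B\A), which it isn't
            have hτfix : τ y = y := by
              by_contra hne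
              rcases Finset.mem_union.mp (h1 y hne) with h' | h'
              · exact (Finset.mem_sdiff.mp h').2 hyB
              · exact (Finset.mem_sdiff.mp h').2 hyS
            rw [hxy, hτfix]; exact (hBIco y hyB).2
          · have := h2 y (Finset.mem_sdiff.mpr ⟨hyS, hyB⟩)
            have := (hBIco _ ((Finset.mem_sdiff.mp this).1)).2
            rw [hxy]; omega
      · -- y < m : τ fixes y
        push_neg at hmy
        have hτfix : τ y = y := by
          by_contra hne
          rcases Finset.mem_union.mp (h1 y hne) with h' | h'
          · have := hAm y (Finset.mem_sdiff.mp h').1; omega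
          · have := (hBIco y (Finset.mem_sdiff.mp h').1).1; omega
        rw [hxy, hτfix]; omega
end

section
/- If C is an m-class of S_ℕ^r (an orbit under componentwise conjugation by Stab(m)) and n ≥ ||C||^m + m, then C ∩ S_n^r is a single orbit under componentwise conjugation by Stab_n(m) = Stab(m) ∩ S_n. Moreover every Stab_n(m)-orbit of S_n^r arises in this way from a unique m-class of S_ℕ^r. -/
open Equiv

lemma fix_inv {m : ℕ} (τ : Equiv.Perm ℕ) (h : ∀ x < m, τ x = x) :
    ∀ x < m, τ⁻¹ x = x := by
  intro x hx
  have : τ⁻¹ (τ x) = x := τ.symm_apply_apply x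
  rwa [h x hx] at this

lemma conj_aux (m n : ℕ) (hmn : m ≤ n) {r : ℕ} (σ σ' : Fin r → Equiv.Perm ℕ)
    (hs : ∀ (i : Fin r) (x : ℕ), σ i x ≠ x → x < n)
    (hs' : ∀ (i : Fin r) (x : ℕ), σ' i x ≠ x → x < n)
    (ρ₀ : Equiv.Perm ℕ) (fixm : ∀ x < m, ρ₀ x = x)
    (hconj : ∀ i, σ' i = ρ₀ * σ i * ρ₀⁻¹) :
    ∃ ρ : Equiv.Perm ℕ, (∀ x : ℕ, ρ x ≠ x → x < n) ∧ (∀ x < m, ρ x = x) ∧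
      ∀ i, σ' i = ρ * σ i * ρ⁻¹ := by
  classical
  have happ : ∀ i x, σ' i (ρ₀ x) = ρ₀ (σ i x) := by
    intro i x
    rw [hconj i]
    simp [Equiv.Perm.mul_apply]
  -- predicates on Fin n
  set p : Fin n → Prop := fun x => (x : ℕ) < m ∨ ∃ i, σ i (x : ℕ) ≠ (x : ℕ) with hp
  set q : Fin n → Prop := fun x => (x : ℕ) < m ∨ ∃ i, σ' i (x : ℕ) ≠ (x : ℕ) with hq
  have hρ₀m : ∀ x : ℕ, x < m → ρ₀ x = x := fixm
  have hρ₀m' : ∀ x : ℕ, x < m → ρ₀⁻¹ x = x := fix_inv ρ₀ fixm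
  have hlt_iff : ∀ x : ℕ, ρ₀ x < m ↔ x < m := by
    intro x
    constructor
    · intro h
      have h2 := hρ₀m' _ h
      simp only [Equiv.Perm.coe_inv, Equiv.symm_apply_apply] at h2
      rw [h2]; exact h
    · intro h; rw [hρ₀m x h]; exact h
  -- forward transfer
  have fwd : ∀ x : ℕ, (x < m ∨ ∃ i, σ i x ≠ x) →
      (ρ₀ x < n ∧ (ρ₀ x < m ∨ ∃ i, σ' i (ρ₀ x) ≠ ρ₀ x)) := by
    intro x hx
    rcases hx with hx | ⟨i, hi⟩
    · refine ⟨?_, Or.inl ((hlt_iff x).2 hx)⟩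
      rw [hρ₀m x hx]; exact lt_of_lt_of_le hx hmn
    · have hne : σ' i (ρ₀ x) ≠ ρ₀ x := by
        rw [happ i x]
        exact fun h => hi (ρ₀.injective h)
      exact ⟨hs' i _ hne, Or.inr ⟨i, hne⟩⟩
  have happ' : ∀ i x, σ i (ρ₀⁻¹ x) = ρ₀⁻¹ (σ' i x) := by
    intro i x
    have := happ i (ρ₀⁻¹ x)
    simp only [Equiv.Perm.coe_inv, Equiv.apply_symm_apply] at this
    rw [this]
    simp
  have bwd : ∀ x : ℕ, (x < m ∨ ∃ i, σ' i x ≠ x) →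
      (ρ₀⁻¹ x < n ∧ (ρ₀⁻¹ x < m ∨ ∃ i, σ i (ρ₀⁻¹ x) ≠ ρ₀⁻¹ x)) := by
    intro x hx
    rcases hx with hx | ⟨i, hi⟩
    · refine ⟨?_, Or.inl ?_⟩
      · rw [hρ₀m' x hx]; exact lt_of_lt_of_le hx hmn
      · rw [hρ₀m' x hx]; exact hx
    · have hne : σ i (ρ₀⁻¹ x) ≠ ρ₀⁻¹ x := by
        rw [happ' i x]
        exact fun h => hi (ρ₀⁻¹.injective h)
      exact ⟨hs i _ hne, Or.inr ⟨i, hne⟩⟩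
  -- the equivalence between subtypes
  let e : {x : Fin n // p x} ≃ {x : Fin n // q x} :=
    { toFun := fun x => ⟨⟨ρ₀ (x : Fin n), (fwd _ x.2).1⟩, (fwd _ x.2).2⟩
      invFun := fun x => ⟨⟨ρ₀⁻¹ (x : Fin n), (bwd _ x.2).1⟩, (bwd _ x.2).2⟩
      left_inv := by intro x; ext; simp
      right_inv := by intro x; ext; simp }
  have hcard : Fintype.card {x : Fin n // ¬ p x} = Fintype.card {x : Fin n // ¬ q x} := by
    have h1 : Fintype.card {x : Fin n // p x} = Fintype.card {x : Fin n // q x} :=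
      Fintype.card_congr e
    have h2 := Fintype.card_subtype_compl (p := p)
    have h3 := Fintype.card_subtype_compl (p := q)
    rw [h2, h3, h1]
  let f : {x : Fin n // ¬ p x} ≃ {x : Fin n // ¬ q x} := Fintype.equivOfCardEq hcard
  let g : Equiv.Perm (Fin n) := Equiv.subtypeCongr e f
  let ρ : Equiv.Perm ℕ := g.extendDomain (Fin.equivSubtype)
  have hρ_out : ∀ x : ℕ, ¬ x < n → ρ x = x := fun x hx =>
    Equiv.Perm.extendDomain_apply_not_subtype g Fin.equivSubtype hx
  have hρ_in : ∀ x : Fin n, ρ (x : ℕ) = ((g x : Fin n) : ℕ) := by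
    intro x
    have := Equiv.Perm.extendDomain_apply_subtype g Fin.equivSubtype (b := (x : ℕ)) x.2
    rw [this]
    congr 1
  have hg_p : ∀ (x : Fin n) (h : p x), ((g x : Fin n) : ℕ) = ρ₀ (x : ℕ) := by
    intro x h
    show ((Equiv.subtypeCongr e f x : Fin n) : ℕ) = _
    rw [Equiv.subtypeCongr, Equiv.trans_apply, Equiv.trans_apply,
      Equiv.sumCompl_symm_apply_of_pos (p := p) h]
    simp [e]
  have hg_np : ∀ (x : Fin n), ¬ p x → ¬ q (g x) := by
    intro x h
    show ¬ q (Equiv.subtypeCongr e f x)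
    rw [Equiv.subtypeCongr, Equiv.trans_apply, Equiv.trans_apply,
      Equiv.sumCompl_symm_apply_of_neg (p := p) h]
    simp
    exact (f ⟨x, h⟩).2
  refine ⟨ρ, ?_, ?_, ?_⟩
  · intro x hx
    by_contra h
    exact hx (hρ_out x h)
  · intro x hx
    have hxn : x < n := lt_of_lt_of_le hx hmn
    have := hρ_in ⟨x, hxn⟩
    rw [this, hg_p ⟨x, hxn⟩ (Or.inl hx)]
    exact hρ₀m x hx
  · intro i
    ext x
    -- show σ' i x = ρ (σ i (ρ⁻¹ x)); equivalently ∀ y, ρ (σ i y) = σ' i (ρ y)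
    have key : ∀ y : ℕ, ρ (σ i y) = σ' i (ρ y) := by
      intro y
      by_cases hyn : y < n
      · by_cases hpy : p (⟨y, hyn⟩ : Fin n)
        · -- σ i y also satisfies p
          have hσy : σ i y < n := by
            by_cases h : σ i y = y
            · rw [h]; exact hyn
            · exact hs i (σ i y) (fun hh => h ((σ i).injective hh))
          have hpσ : p (⟨σ i y, hσy⟩ : Fin n) := by
            by_cases h : σ i y = y
            · simpa [hp, h] using hpy
            · exact Or.inr ⟨i, by simpa using h⟩
          rw [hρ_in ⟨σ i y, hσy⟩, hg_p _ hpσ, hρ_in ⟨y, hyn⟩, hg_p _ hpy]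
          exact (happ i y).symm
        · have hfix : σ i y = y := by
            by_contra h
            exact hpy (Or.inr ⟨i, h⟩)
          rw [hfix]
          have hnq := hg_np ⟨y, hyn⟩ hpy
          have : σ' i ((g ⟨y, hyn⟩ : Fin n) : ℕ) = ((g ⟨y, hyn⟩ : Fin n) : ℕ) := by
            by_contra h
            exact hnq (Or.inr ⟨i, h⟩)
          rw [hρ_in ⟨y, hyn⟩, this]
      · have h1 : σ i y = y := by
          by_contra h; exact hyn (hs i y h)
        have h2 : ρ y = y := hρ_out y hyn
        have h3 : σ' i y = y := by
          by_contra h; exact hyn (hs' i y h)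
        rw [h1, h2, h3]
    have := key (ρ⁻¹ x)
    simp only [Equiv.Perm.coe_inv, Equiv.apply_symm_apply] at this
    simp [Equiv.Perm.mul_apply, this]


/-- If `C` is an `m`-class of `S_ℕ^r` (the `Stab(m)`-conjugation
orbit of a tuple `π` of finitely supported permutations of `ℕ`) and
`n ≥ ‖C‖^m + m`, then `C ∩ S_n^r` is a single orbit under componentwise
conjugation by `Stab_n(m)`: any two members of `C` supported on the first `n`
points are conjugate by a permutation fixing the first `m` points and supported
on the first `n` points.  Moreover every `Stab_n(m)`-orbit of `S_n^r` arises
from a unique `m`-class of `S_ℕ^r`: a tuple in `S_n^r` lying in the classes of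
both `π` and `π'` forces those classes to coincide. -/
theorem stmt5 (m n r : ℕ) (hmn : m ≤ n) (π : Fin r → Equiv.Perm ℕ)
    (hfin : ∀ i, {x : ℕ | π i x ≠ x}.Finite)
    (hdeg : {x : ℕ | m ≤ x ∧ ∃ i, π i x ≠ x}.ncard + m ≤ n) :
    (∀ σ σ' : Fin r → Equiv.Perm ℕ,
      (∀ (i : Fin r) (x : ℕ), σ i x ≠ x → x < n) →
      (∀ (i : Fin r) (x : ℕ), σ' i x ≠ x → x < n) →
      (∃ τ : Equiv.Perm ℕ, {x : ℕ | τ x ≠ x}.Finite ∧ (∀ x < m, τ x = x) ∧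
        ∀ i, σ i = τ * π i * τ⁻¹) →
      (∃ τ : Equiv.Perm ℕ, {x : ℕ | τ x ≠ x}.Finite ∧ (∀ x < m, τ x = x) ∧
        ∀ i, σ' i = τ * π i * τ⁻¹) →
      ∃ ρ : Equiv.Perm ℕ, (∀ x : ℕ, ρ x ≠ x → x < n) ∧ (∀ x < m, ρ x = x) ∧
        ∀ i, σ' i = ρ * σ i * ρ⁻¹) ∧
    (∀ π' : Fin r → Equiv.Perm ℕ, (∀ i, {x : ℕ | π' i x ≠ x}.Finite) →
      ∀ σ : Fin r → Equiv.Perm ℕ, (∀ (i : Fin r) (x : ℕ), σ i x ≠ x → x < n) →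
      (∃ τ : Equiv.Perm ℕ, {x : ℕ | τ x ≠ x}.Finite ∧ (∀ x < m, τ x = x) ∧
        ∀ i, σ i = τ * π i * τ⁻¹) →
      (∃ τ : Equiv.Perm ℕ, {x : ℕ | τ x ≠ x}.Finite ∧ (∀ x < m, τ x = x) ∧
        ∀ i, σ i = τ * π' i * τ⁻¹) →
      ∃ τ : Equiv.Perm ℕ, {x : ℕ | τ x ≠ x}.Finite ∧ (∀ x < m, τ x = x) ∧
        ∀ i, π' i = τ * π i * τ⁻¹) := by
  constructor
  · rintro σ σ' hs hs' ⟨τ, hτfin, hτm, hτ⟩ ⟨τ', hτ'fin, hτ'm, hτ'⟩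
    refine conj_aux m n hmn σ σ' hs hs' (τ' * τ⁻¹) ?_ ?_
    · intro x hx
      have h1 : τ⁻¹ x = x := fix_inv τ hτm x hx
      simp only [Equiv.Perm.mul_apply, h1]
      exact hτ'm x hx
    · intro i
      rw [hτ' i, hτ i]
      group
  · rintro π' hfin' σ hs ⟨τ, hτfin, hτm, hτ⟩ ⟨τ', hτ'fin, hτ'm, hτ'⟩
    refine ⟨τ'⁻¹ * τ, ?_, ?_, ?_⟩
    · refine (hτ'fin.union hτfin).subset ?_
      intro x hx
      by_contra h
      simp only [Set.mem_union, Set.mem_setOf_eq, not_or, not_not] at h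
      obtain ⟨h1, h2⟩ := h
      have h3 : τ'⁻¹ x = x := by
        have : τ'⁻¹ (τ' x) = x := τ'.symm_apply_apply x
        rwa [h1] at this
      simp only [Set.mem_setOf_eq, Equiv.Perm.mul_apply, h2, h3] at hx
      exact hx rfl
    · intro x hx
      simp only [Equiv.Perm.mul_apply, hτm x hx]
      exact fix_inv τ' hτ'm x hx
    · intro i
      have h1 : π' i = τ'⁻¹ * σ i * τ' := by rw [hτ' i]; group
      rw [h1, hτ i]
      group
end

section
/- In the group algebra ℤ[S_n], the Jucys-Murphy elements L_i := Σ_{j<i} (j,i) pairwise commute: L_i L_j = L_j L_i for all i, j ∈ [n]. -/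
/-- The `i`-th Jucys–Murphy element `L_i = Σ_{j<i} (j,i)` of `ℤ[S_n]`. -/
noncomputable def JM (n : ℕ) (i : Fin n) : MonoidAlgebra ℤ (Equiv.Perm (Fin n)) :=
  ∑ j ∈ Finset.Iio i, MonoidAlgebra.of ℤ (Equiv.Perm (Fin n)) (Equiv.swap j i)

lemma swap_comm_JM (n : ℕ) (i k j : Fin n) (hk : k < i) (hj : j < i) :
    MonoidAlgebra.of ℤ (Equiv.Perm (Fin n)) (Equiv.swap k j) * JM n i
      = JM n i * MonoidAlgebra.of ℤ (Equiv.Perm (Fin n)) (Equiv.swap k j) := by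
  unfold JM
  rw [Finset.mul_sum, Finset.sum_mul]
  rw [show (∑ m ∈ Finset.Iio i, MonoidAlgebra.of ℤ (Equiv.Perm (Fin n)) (Equiv.swap m i) *
      MonoidAlgebra.of ℤ (Equiv.Perm (Fin n)) (Equiv.swap k j))
    = ∑ m ∈ Finset.Iio i, MonoidAlgebra.of ℤ (Equiv.Perm (Fin n))
        (Equiv.swap (Equiv.swap k j m) i) *
        MonoidAlgebra.of ℤ (Equiv.Perm (Fin n)) (Equiv.swap k j) from ?_]
  · refine Finset.sum_congr rfl fun m hm => ?_
    rw [← map_mul, ← map_mul]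
    congr 1
    rw [Equiv.mul_swap_eq_swap_mul]
    have hik : Equiv.swap k j i = i :=
      Equiv.swap_apply_of_ne_of_ne (ne_of_gt hk) (ne_of_gt hj)
    rw [hik]
  · refine (Finset.sum_nbij' (fun m => Equiv.swap k j m) (fun m => Equiv.swap k j m)
      ?_ ?_ ?_ ?_ ?_).symm
    · intro m hm
      simp only [Finset.mem_Iio] at *
      rcases Equiv.swap_apply_def k j m with _
      by_cases h1 : m = k
      · simpa [h1] using hj
      by_cases h2 : m = j
      · simpa [h2] using hk
      · rwa [Equiv.swap_apply_of_ne_of_ne h1 h2]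
    · intro m hm
      simp only [Finset.mem_Iio] at *
      by_cases h1 : m = k
      · simpa [h1] using hj
      by_cases h2 : m = j
      · simpa [h2] using hk
      · rwa [Equiv.swap_apply_of_ne_of_ne h1 h2]
    · intro m _; simp
    · intro m _; simp
    · intro m _; rfl

/-- In the group algebra `ℤ[S_n]`, the Jucys–Murphy elements
`L_i := Σ_{j<i} (j,i)` pairwise commute. -/
theorem stmt13 (n : ℕ) (i j : Fin n) : JM n i * JM n j = JM n j * JM n i := by
  have key : ∀ a b : Fin n, b < a → JM n b * JM n a = JM n a * JM n b := by
    intro a b hba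
    unfold JM
    conv_lhs => rw [Finset.sum_mul]
    conv_rhs => rw [Finset.mul_sum]
    refine Finset.sum_congr rfl fun k hk => ?_
    simp only [Finset.mem_Iio] at hk
    exact swap_comm_JM n a k b (hk.trans hba) hba
  rcases lt_trichotomy i j with h | h | h
  · exact key j i h
  · rw [h]
  · exact (key i j h).symm
end
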